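/- For all b, c > 0 and N > 0, the integral over a from 0 to infinity of (1 + a^2 b^2 + a^{-2} c^2)^{-N} with respect to da/a is at most (2/N) · I_N(√(bc)). -/

import Mathlib

/-!
For `a > 0` the base `1 + a²b² + a⁻²c²` is at least `1`, `(c/a)²` and `(ba)²`, so the integrand
is at most `(c/a)^(-2N) a⁻¹`, `a⁻¹` and `(ba)^(-2N) a⁻¹`. Given `r > 0` with `bc ≤ r²`, use these
on `(0, c/r]`, `(c/r, r/b]` and `(r/b, ∞)`: the outer pieces contribute `r^(-2N)/(2N)` each and the
middle one `log (r²/(bc))`. Take `r = √(bc)` if `√(bc) ≥ 1` and `r = 1` otherwise.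
-/

open MeasureTheory Set

/-- `I_N(t) = t^{-N}` for `t ≥ 1` and `I_N(t) = 1 - N·log t` for `0 < t ≤ 1`. -/
noncomputable def IN (N t : ℝ) : ℝ := if 1 ≤ t then t ^ (-N) else 1 - N * Real.log t

lemma div_rpow_neg_mul_inv {c a : ℝ} (hc : 0 ≤ c) (ha : 0 < a) (p : ℝ) :
    (c / a) ^ (-p) * a⁻¹ = c ^ (-p) * a ^ (p - 1) := by
  rw [Real.div_rpow hc ha.le, Real.rpow_neg ha.le, Real.rpow_sub_one ha.ne']
  field_simp

lemma mul_rpow_neg_mul_inv {b a : ℝ} (hb : 0 ≤ b) (ha : 0 < a) (p : ℝ) :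
    (b * a) ^ (-p) * a⁻¹ = b ^ (-p) * a ^ (-p - 1) := by
  rw [Real.mul_rpow hb ha.le, Real.rpow_sub_one ha.ne']
  ring

lemma integrableOn_Ioc_zero_div_rpow_neg_mul_inv {p c : ℝ} (hp : 0 < p) (hc : 0 ≤ c) (A : ℝ) :
    IntegrableOn (fun a : ℝ => (c / a) ^ (-p) * a⁻¹) (Ioc 0 A) := by
  refine IntegrableOn.congr_fun ?_ (fun a ha => (div_rpow_neg_mul_inv hc ha.1 p).symm)
    measurableSet_Ioc
  rcases le_total 0 A with hA | hA
  · exact ((intervalIntegral.intervalIntegrable_rpow' (by linarith : -1 < p - 1)).1).const_mul _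
  · simp [Ioc_eq_empty_of_le hA]

lemma setIntegral_Ioc_zero_div_rpow_neg_mul_inv {p c A : ℝ} (hp : 0 < p) (hc : 0 ≤ c) (hA : 0 < A) :
    ∫ a in Ioc 0 A, (c / a) ^ (-p) * a⁻¹ = (c / A) ^ (-p) / p := by
  rw [setIntegral_congr_fun measurableSet_Ioc (fun a ha => div_rpow_neg_mul_inv hc ha.1 p),
    integral_const_mul, ← intervalIntegral.integral_of_le hA.le,
    integral_rpow (Or.inl (by linarith)), sub_add_cancel, Real.zero_rpow hp.ne', sub_zero,
    Real.div_rpow hc hA.le, Real.rpow_neg hA.le]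
  field_simp

lemma integrableOn_Ioi_mul_rpow_neg_mul_inv {p b B : ℝ} (hp : 0 < p) (hb : 0 ≤ b) (hB : 0 < B) :
    IntegrableOn (fun a : ℝ => (b * a) ^ (-p) * a⁻¹) (Ioi B) :=
  IntegrableOn.congr_fun ((integrableOn_Ioi_rpow_of_lt (by linarith : -p - 1 < -1) hB).const_mul _)
    (fun a ha => (mul_rpow_neg_mul_inv hb (hB.trans ha) p).symm) measurableSet_Ioi

lemma setIntegral_Ioi_mul_rpow_neg_mul_inv {p b B : ℝ} (hp : 0 < p) (hb : 0 ≤ b) (hB : 0 < B) :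
    ∫ a in Ioi B, (b * a) ^ (-p) * a⁻¹ = (b * B) ^ (-p) / p := by
  rw [setIntegral_congr_fun measurableSet_Ioi
      (fun a ha => mul_rpow_neg_mul_inv hb (hB.trans ha) p),
    integral_const_mul, integral_Ioi_rpow_of_lt (by linarith) hB, sub_add_cancel,
    Real.mul_rpow hb hB.le]
  field_simp

lemma integrableOn_inv_Ioc {A : ℝ} (hA : 0 < A) (B : ℝ) :
    IntegrableOn (fun a : ℝ => a⁻¹) (Ioc A B) :=
  ((continuousOn_inv₀.mono fun _ ha => (hA.trans_le ha.1).ne').integrableOn_Icc).mono_set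
    Ioc_subset_Icc_self

lemma setIntegral_inv_Ioc {A B : ℝ} (hA : 0 < A) (hAB : A ≤ B) :
    ∫ a in Ioc A B, a⁻¹ = Real.log (B / A) := by
  rw [← intervalIntegral.integral_of_le hAB, integral_inv_of_pos hA (hA.trans_le hAB)]

lemma setIntegral_Ioi_zero_le_sum_of_le {μ : Measure ℝ} {f g₁ g₂ g₃ : ℝ → ℝ} {A B : ℝ}
    (hA : 0 < A) (hAB : A ≤ B) (hf : AEStronglyMeasurable f (μ.restrict (Ioi 0)))
    (hf₀ : ∀ a ∈ Ioi (0 : ℝ), 0 ≤ f a)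
    (hg₁ : IntegrableOn g₁ (Ioc 0 A) μ) (hg₂ : IntegrableOn g₂ (Ioc A B) μ)
    (hg₃ : IntegrableOn g₃ (Ioi B) μ) (hfg₁ : ∀ a ∈ Ioc 0 A, f a ≤ g₁ a)
    (hfg₂ : ∀ a ∈ Ioc A B, f a ≤ g₂ a) (hfg₃ : ∀ a ∈ Ioi B, f a ≤ g₃ a) :
    ∫ a in Ioi 0, f a ∂μ ≤
      (∫ a in Ioc 0 A, g₁ a ∂μ) + (∫ a in Ioc A B, g₂ a ∂μ) + ∫ a in Ioi B, g₃ a ∂μ := by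
  have piece : ∀ {s : Set ℝ} {g : ℝ → ℝ}, MeasurableSet s → s ⊆ Ioi 0 → IntegrableOn g s μ →
      (∀ a ∈ s, f a ≤ g a) → IntegrableOn f s μ ∧ ∫ a in s, f a ∂μ ≤ ∫ a in s, g a ∂μ := by
    intro s g hs hs₀ hg hfg
    have hfi : IntegrableOn f s μ :=
      integrable_of_le_of_le (hf.mono_measure (Measure.restrict_mono hs₀ le_rfl))
        (ae_restrict_of_forall_mem hs fun a ha => hf₀ a (hs₀ ha))
        (ae_restrict_of_forall_mem hs hfg) (integrable_zero _ _ _) hg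
    exact ⟨hfi, setIntegral_mono_on hfi hg hs hfg⟩
  obtain ⟨hf₁, h₁⟩ := piece measurableSet_Ioc Ioc_subset_Ioi_self hg₁ hfg₁
  obtain ⟨hf₂, h₂⟩ := piece measurableSet_Ioc (fun a ha => hA.trans ha.1) hg₂ hfg₂
  obtain ⟨hf₃, h₃⟩ := piece measurableSet_Ioi (Ioi_subset_Ioi (hA.le.trans hAB)) hg₃ hfg₃
  have hf₂₃ : IntegrableOn f (Ioi A) μ := Ioc_union_Ioi_eq_Ioi hAB ▸ hf₂.union hf₃
  rw [← Ioc_union_Ioi_eq_Ioi hA.le,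
    setIntegral_union (Ioc_disjoint_Ioi le_rfl) measurableSet_Ioi hf₁ hf₂₃,
    ← Ioc_union_Ioi_eq_Ioi hAB,
    setIntegral_union (Ioc_disjoint_Ioi le_rfl) measurableSet_Ioi hf₂ hf₃]
  linarith

lemma rpow_neg_le_rpow_neg_two_mul {x z N : ℝ} (hx : 0 < x) (hxz : x ^ 2 ≤ z) (hN : 0 ≤ N) :
    z ^ (-N) ≤ x ^ (-(2 * N)) := by
  calc z ^ (-N) ≤ (x ^ 2) ^ (-N) := Real.rpow_le_rpow_of_nonpos (by positivity) hxz (by linarith)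
    _ = x ^ (-(2 * N)) := by
      rw [← Real.rpow_natCast, ← Real.rpow_mul hx.le]
      ring_nf

lemma setIntegral_Ioi_one_add_sq_add_inv_sq_rpow_neg_le {N b c r : ℝ} (hN : 0 < N) (hb : 0 < b)
    (hc : 0 < c) (hr : 0 < r) (hbcr : b * c ≤ r ^ 2) :
    ∫ a in Ioi (0 : ℝ), (1 + a ^ 2 * b ^ 2 + (a⁻¹) ^ 2 * c ^ 2) ^ (-N) * a⁻¹ ≤
      r ^ (-(2 * N)) / N + Real.log (r ^ 2 / (b * c)) := by
  have h2N : 0 < 2 * N := by positivity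
  have hA : 0 < c / r := div_pos hc hr
  have hB : 0 < r / b := div_pos hr hb
  have hAB : c / r ≤ r / b := by
    rw [div_le_div_iff₀ hr hb]
    linarith
  have hterms : ∀ a : ℝ, 0 ≤ a ^ 2 * b ^ 2 ∧ 0 ≤ (a⁻¹) ^ 2 * c ^ 2 := fun a =>
    ⟨by positivity, by positivity⟩
  have hbound : ∀ a > 0, ∀ x > 0, x ^ 2 ≤ 1 + a ^ 2 * b ^ 2 + (a⁻¹) ^ 2 * c ^ 2 →
      (1 + a ^ 2 * b ^ 2 + (a⁻¹) ^ 2 * c ^ 2) ^ (-N) * a⁻¹ ≤ x ^ (-(2 * N)) * a⁻¹ :=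
    fun a ha x hx hxw => mul_le_mul_of_nonneg_right (rpow_neg_le_rpow_neg_two_mul hx hxw hN.le)
      (inv_nonneg.2 ha.le)
  refine (setIntegral_Ioi_zero_le_sum_of_le hA hAB (by fun_prop) (fun a ha => ?_)
    (integrableOn_Ioc_zero_div_rpow_neg_mul_inv h2N hc.le _) (integrableOn_inv_Ioc hA _)
    (integrableOn_Ioi_mul_rpow_neg_mul_inv h2N hb.le hB) (fun a ha => ?_) (fun a ha => ?_)
    (fun a ha => ?_)).trans_eq ?_
  · have : 0 < a := ha
    positivity
  · obtain ⟨hb', hc'⟩ := hterms a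
    exact hbound a ha.1 _ (div_pos hc ha.1)
      (by linarith [show (c / a) ^ 2 = (a⁻¹) ^ 2 * c ^ 2 by ring])
  · obtain ⟨hb', hc'⟩ := hterms a
    simpa using hbound a (hA.trans ha.1) 1 one_pos (by linarith)
  · obtain ⟨hb', hc'⟩ := hterms a
    exact hbound a (hB.trans ha) _ (mul_pos hb (hB.trans ha))
      (by linarith [show (b * a) ^ 2 = a ^ 2 * b ^ 2 by ring])
  · rw [setIntegral_Ioc_zero_div_rpow_neg_mul_inv h2N hc.le hA, setIntegral_inv_Ioc hA hAB,
      setIntegral_Ioi_mul_rpow_neg_mul_inv h2N hb.le hB, div_div_cancel₀ hc.ne',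
      mul_div_cancel₀ _ hb.ne', div_div_div_eq, ← sq]
    ring

/-- For `b, c > 0` and `N > 0`,
`∫_0^∞ (1 + a² b² + a⁻² c²)^{-N} da/a ≤ (2/N) · I_N(√(bc))`. -/
theorem integral_est_IN_two_params (N : ℝ) (hN : 0 < N) (b c : ℝ) (hb : 0 < b) (hc : 0 < c) :
    (∫ a in Ioi (0 : ℝ), (1 + a ^ 2 * b ^ 2 + (a⁻¹) ^ 2 * c ^ 2) ^ (-N) * a⁻¹)
      ≤ (2 / N) * IN N (Real.sqrt (b * c)) := by
  set t := Real.sqrt (b * c)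
  have hbc : 0 < b * c := mul_pos hb hc
  have ht : t ^ 2 = b * c := Real.sq_sqrt hbc.le
  rw [IN]
  split_ifs with h1t
  · have hexp : t ^ (-(2 * N)) ≤ t ^ (-N) := Real.rpow_le_rpow_of_exponent_le h1t (by linarith)
    have hpos : 0 ≤ t ^ (-N) := Real.rpow_nonneg (Real.sqrt_nonneg _) _
    calc _ ≤ t ^ (-(2 * N)) / N + Real.log (t ^ 2 / (b * c)) :=
          setIntegral_Ioi_one_add_sq_add_inv_sq_rpow_neg_le hN hb hc (by positivity) ht.ge
      _ ≤ 2 * t ^ (-N) / N := by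
        rw [ht, div_self hbc.ne', Real.log_one, add_zero]
        gcongr
        linarith
      _ = 2 / N * t ^ (-N) := by ring
  · have hbc1 : b * c ≤ 1 ^ 2 := by
      nlinarith [Real.sqrt_nonneg (b * c), not_le.mp h1t]
    calc _ ≤ 1 ^ (-(2 * N)) / N + Real.log (1 ^ 2 / (b * c)) :=
          setIntegral_Ioi_one_add_sq_add_inv_sq_rpow_neg_le hN hb hc one_pos hbc1
      _ = 1 / N - 2 * Real.log t := by
        rw [Real.one_rpow, one_pow, Real.log_div one_ne_zero hbc.ne', Real.log_one, ← ht,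
          Real.log_pow]
        push_cast
        ring
      _ ≤ 2 / N * (1 - N * Real.log t) := by
        rw [show 2 / N * (1 - N * Real.log t) = 2 / N - 2 * Real.log t by field_simp]
        gcongr
        norm_num
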